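/- Let δ > 0 and δ_k = δ/2^k for k ≥ 0. For each k let v_k : ℕ_0^n → [0,∞) satisfy v_k(m+e_i) − v_k(m) ≥ a_i p_i δ_k for every i and v_k(m+1) − v_k(m) ≤ v_k(m)(e^{(c+λ)δ_k} − 1) for every m, and let V_k(x) := v_k(ρ^{δ_k}(x)) + a·(x − ⟨x⟩^{δ_k}). Assume V_k ≤ V_{k+1} pointwise on ℝ_+^n and that V̄(x) := lim_{k→∞} V_k(x) is finite for every x. Then for all x, y ∈ ℝ_+^n with y ≥ x (componentwise): a·(y − x) ≤ V̄(y) − V̄(x) ≤ V̄(y) · (2(c+λ)/p̂) · ‖y − x‖_1, where p̂ = min_i p_i. In particular V̄ is nondecreasing and locally Lipschitz on ℝ_+^n. -/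

import Mathlib

open MeasureTheory Filter

noncomputable section

/-- The grid point associated with a multi-index `m`: `g^δ(m) = (p₁ δ m₁, …, pₙ δ mₙ)`. -/
def gdel (n : ℕ) (p : Fin n → ℝ) (δ : ℝ) (m : Fin n → ℕ) : Fin n → ℝ :=
  fun i => p i * δ * (m i : ℝ)

/-- The index of the closest grid point below `x`: `ρ^δ(x) = (⌊xᵢ/(δ pᵢ)⌋)ᵢ`. -/
def rho (n : ℕ) (p : Fin n → ℝ) (δ : ℝ) (x : Fin n → ℝ) : Fin n → ℕ :=
  fun i => ⌊x i / (δ * p i)⌋₊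

/-- The closest grid point below `x`: `⟨x⟩^δ = g^δ(ρ^δ(x))`. -/
def proj (n : ℕ) (p : Fin n → ℝ) (δ : ℝ) (x : Fin n → ℝ) : Fin n → ℝ :=
  gdel n p δ (rho n p δ x)

/-- The extension `V(x) = v(ρ^δ(x)) + a·(x − ⟨x⟩^δ)` of a grid function `v`. -/
def Vext (n : ℕ) (p a : Fin n → ℝ) (δ : ℝ) (v : (Fin n → ℕ) → ℝ) (x : Fin n → ℝ) : ℝ :=
  v (rho n p δ x) + ∑ i, a i * (x i - proj n p δ x i)

/-!
On a grid of mesh `δ`, the lower bound `v(m + eᵢ) - v(m) ≥ aᵢ pᵢ δ` makes `v` increase by at least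
`a·(⟨y⟩ - ⟨x⟩)` between the grid points below `x ≤ y`, and the affine part of `Vext` supplies the
remaining `a·((y - ⟨y⟩) - (x - ⟨x⟩))`. For the upper bound, `v` is monotone on the grid, so
`v(m + d) ≤ v(m + ‖d‖₁ 𝟙) ≤ v(m) e^{(c+λ)δ‖d‖₁}`, whence `v(m + d) - v(m) ≤ v(m + d) (c+λ) δ ‖d‖₁`
by `1 - e^{-s} ≤ s`; the number `‖d‖₁` of grid steps between `x` and `y` is at most
`∑ (yᵢ - xᵢ)/(δ pᵢ) + n`. Both bounds hold on every level up to errors `O(δ_k)` and pass to the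
limit. Local Lipschitz continuity then follows by comparing `u` and `w` through `u ⊔ w`.
-/

theorem sub_le_mul_of_le_mul_exp {u v s : ℝ} (hu : 0 ≤ u) (h : u ≤ v * Real.exp s) :
    u - v ≤ u * s := by
  have hv : u * Real.exp (-s) ≤ v := by
    rw [Real.exp_neg, ← div_eq_mul_inv, div_le_iff₀ (Real.exp_pos s)]
    exact h
  nlinarith [Real.add_one_le_exp (-s)]

section Grid

variable {ι : Type*} {w : (ι → ℕ) → ℝ}

theorem le_mul_pow_of_le_mul {E : ℝ} (hE : 0 ≤ E) (h : ∀ m, w (m + 1) ≤ w m * E)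
    (m : ι → ℕ) (D : ℕ) : w (m + D • 1) ≤ w m * E ^ D := by
  induction D with
  | zero => simp
  | succ D ih =>
    calc w (m + (D + 1) • 1) = w (m + D • 1 + 1) := by rw [succ_nsmul, add_assoc]
      _ ≤ w (m + D • 1) * E := h _
      _ ≤ w m * E ^ D * E := by gcongr
      _ = w m * E ^ (D + 1) := by ring

variable [Fintype ι]

theorem sub_le_mul_sum_sub (hw : ∀ m, 0 ≤ w m) (hmono : Monotone w) {s : ℝ}
    (h : ∀ m, w (m + 1) ≤ w m * Real.exp s) {m m' : ι → ℕ} (hm : m ≤ m') :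
    w m' - w m ≤ w m' * (s * ∑ i, ((m' i : ℝ) - m i)) := by
  set D := ∑ i, (m' i - m i) with hD
  have hle : m' ≤ m + D • 1 := fun i => by
    have : m' i - m i ≤ D := Finset.single_le_sum (f := fun i => m' i - m i) (by simp) (by simp)
    simp only [Pi.add_apply, Pi.smul_apply, Pi.one_apply, smul_eq_mul, mul_one]
    omega
  have hcast : ∑ i, ((m' i : ℝ) - m i) = D := by
    simp only [hD, Nat.cast_sum]
    exact Finset.sum_congr rfl fun i _ => (Nat.cast_sub (hm i)).symm
  refine hcast ▸ sub_le_mul_of_le_mul_exp (hw m') ?_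
  calc w m' ≤ w (m + D • 1) := hmono hle
    _ ≤ w m * Real.exp s ^ D := le_mul_pow_of_le_mul (Real.exp_nonneg s) h m D
    _ = w m * Real.exp (s * D) := by rw [← Real.exp_nat_mul, mul_comm s]

variable [DecidableEq ι]

theorem sum_mul_le_sub_of_le_sub_single {b : ι → ℝ}
    (h : ∀ m i, b i ≤ w (m + Pi.single i 1) - w m) (m d : ι → ℕ) :
    ∑ i, b i * d i ≤ w (m + d) - w m := by
  induction d using Pi.single_induction generalizing m with
  | zero => simp
  | add f g hf hg =>
    have := hf m
    have := hg (m + f)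
    simp only [Pi.add_apply, Nat.cast_add, mul_add, Finset.sum_add_distrib, ← add_assoc]
    linarith
  | single i k =>
    simp only [Pi.single_apply, apply_ite (Nat.cast (R := ℝ)), Nat.cast_zero, mul_ite, mul_zero,
      Finset.sum_ite_eq', Finset.mem_univ, if_true]
    induction k with
    | zero => simp
    | succ k ih =>
      have := h (m + Pi.single i k) i
      rw [Pi.single_add (f := fun _ => ℕ) i k 1, ← add_assoc]
      push_cast
      linarith

theorem sum_mul_sub_le_sub_of_le_sub_single {b : ι → ℝ}
    (h : ∀ m i, b i ≤ w (m + Pi.single i 1) - w m) {m m' : ι → ℕ} (hm : m ≤ m') :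
    ∑ i, b i * ((m' i : ℝ) - m i) ≤ w m' - w m := by
  have := sum_mul_le_sub_of_le_sub_single h m (m' - m)
  simp_rw [add_tsub_cancel_of_le hm, Pi.sub_apply, Nat.cast_sub (hm _)] at this
  exact this

theorem monotone_of_nonneg_sub_single (h : ∀ m i, 0 ≤ w (m + Pi.single i 1) - w m) :
    Monotone w := fun m m' hm => by
  simpa using sum_mul_sub_le_sub_of_le_sub_single (b := 0) h hm

end Grid

theorem sum_div_le_sum_abs_div_iInf {ι : Type*} [Fintype ι] {p : ι → ℝ} (hp : ∀ i, 0 < p i)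
    (z : ι → ℝ) : ∑ i, z i / p i ≤ (∑ i, |z i|) / ⨅ i, p i := by
  rw [Finset.sum_div]
  refine Finset.sum_le_sum fun i _ => ?_
  have : Nonempty ι := ⟨i⟩
  obtain ⟨j, hj⟩ := exists_eq_ciInf_of_finite (f := p)
  calc z i / p i ≤ |z i| / p i := div_le_div_of_nonneg_right (le_abs_self _) (hp i).le
    _ ≤ |z i| / ⨅ i, p i := div_le_div_of_nonneg_left (abs_nonneg _) (hj ▸ hp j)
        (ciInf_le (Set.finite_range p).bddBelow i)

theorem mul_sum_div_le_two_mul_div_iInf_mul {ι : Type*} [Fintype ι] {p : ι → ℝ}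
    (hp : ∀ i, 0 < p i) {t : ℝ} (ht : 0 ≤ t) (z : ι → ℝ) :
    t * ∑ i, z i / p i ≤ 2 * t / (⨅ i, p i) * ∑ i, |z i| := by
  have hP : 0 ≤ ⨅ i, p i := Real.iInf_nonneg fun i => (hp i).le
  calc t * ∑ i, z i / p i ≤ t * ((∑ i, |z i|) / ⨅ i, p i) :=
        mul_le_mul_of_nonneg_left (sum_div_le_sum_abs_div_iInf hp z) ht
    _ = t / (⨅ i, p i) * ∑ i, |z i| := by ring
    _ ≤ 2 * t / (⨅ i, p i) * ∑ i, |z i| := by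
        gcongr
        linarith

theorem exists_lipschitzOnWith_inter_ball {ι : Type*} [Fintype ι] {f : (ι → ℝ) → ℝ} {C : ℝ}
    (hC : 0 ≤ C) (hf : MonotoneOn f {x | 0 ≤ x})
    (h : ∀ x y, 0 ≤ x → x ≤ y → f y - f x ≤ f y * C * ∑ i, |y i - x i|) (x : ι → ℝ) :
    ∃ ε > (0 : ℝ), ∃ K : NNReal, LipschitzOnWith K f ({y | 0 ≤ y} ∩ Metric.ball x ε) := by
  refine ⟨1, one_pos, _, LipschitzOnWith.of_le_add_mul' (|f (x + 1)| * C * Fintype.card ι) ?_⟩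
  rintro u ⟨hu, hux⟩ v ⟨hv, hvx⟩
  have hball : ∀ z ∈ Metric.ball x 1, z ≤ x + 1 := fun z hz i => by
    have := (dist_le_pi_dist z x i).trans_lt hz
    rw [Real.dist_eq, abs_lt] at this
    simp only [Pi.add_apply, Pi.one_apply]
    linarith
  have hz : 0 ≤ u ⊔ v := le_sup_of_le_left hu
  have hzx : u ⊔ v ≤ x + 1 := sup_le (hball u hux) (hball v hvx)
  have hfz : f (u ⊔ v) ≤ |f (x + 1)| := (hf hz (hz.trans hzx) hzx).trans (le_abs_self _)
  have hdist : ∑ i, |(u ⊔ v) i - v i| ≤ Fintype.card ι * dist u v := by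
    calc ∑ i, |(u ⊔ v) i - v i| ≤ ∑ _i : ι, dist u v := Finset.sum_le_sum fun i _ => by
          have := abs_max_sub_max_le_abs (u i) (v i) (v i)
          rw [max_self, ← Real.dist_eq] at this
          exact this.trans (dist_le_pi_dist u v i)
      _ = Fintype.card ι * dist u v := by simp
  calc f u ≤ f (u ⊔ v) := hf hu hz le_sup_left
    _ ≤ f v + f (u ⊔ v) * C * ∑ i, |(u ⊔ v) i - v i| := by linarith [h v (u ⊔ v) hv le_sup_right]
    _ ≤ f v + |f (x + 1)| * C * (Fintype.card ι * dist u v) := by gcongr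
    _ = f v + |f (x + 1)| * C * Fintype.card ι * dist u v := by ring

section Discretization

variable {n : ℕ} {p a : Fin n → ℝ} {δ : ℝ} {x y : Fin n → ℝ} {i : Fin n}

theorem proj_le (hp : 0 < p i) (hδ : 0 < δ) (hx : 0 ≤ x i) : proj n p δ x i ≤ x i := by
  have hq := Nat.floor_le (div_nonneg hx (mul_pos hδ hp).le)
  rw [le_div_iff₀ (mul_pos hδ hp)] at hq
  simp only [proj, gdel, rho]
  linarith

theorem lt_proj_add (hp : 0 < p i) (hδ : 0 < δ) (x : Fin n → ℝ) :
    x i < proj n p δ x i + p i * δ := by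
  have hq := Nat.lt_floor_add_one (x i / (δ * p i))
  rw [div_lt_iff₀ (mul_pos hδ hp)] at hq
  simp only [proj, gdel, rho]
  linarith

theorem rho_mono (hp : ∀ i, 0 < p i) (hδ : 0 < δ) : Monotone (rho n p δ) := fun _ _ hxy i =>
  Nat.floor_le_floor (div_le_div_of_nonneg_right (hxy i) (mul_pos hδ (hp i)).le)

theorem sum_rho_sub_le (hp : ∀ i, 0 < p i) (hδ : 0 < δ) (hy : 0 ≤ y) :
    δ * ∑ i, ((rho n p δ y i : ℝ) - rho n p δ x i) ≤ ∑ i, (y i - x i) / p i + n * δ := by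
  have hi : ∀ i, δ * ((rho n p δ y i : ℝ) - rho n p δ x i) ≤ (y i - x i) / p i + δ := fun i => by
    have hy := proj_le (hp i) hδ (hy i)
    have hx := lt_proj_add (hp i) hδ x (i := i)
    simp only [proj, gdel] at hx hy
    rw [div_add' _ _ _ (hp i).ne', le_div_iff₀ (hp i)]
    linarith
  calc δ * ∑ i, ((rho n p δ y i : ℝ) - rho n p δ x i)
      ≤ ∑ i, ((y i - x i) / p i + δ) := by
        rw [Finset.mul_sum]
        exact Finset.sum_le_sum fun i _ => hi i
    _ = ∑ i, (y i - x i) / p i + n * δ := by simp [Finset.sum_add_distrib]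

theorem sum_sub_proj_nonneg (hp : ∀ i, 0 < p i) (ha : ∀ i, 0 ≤ a i) (hδ : 0 < δ) (hx : 0 ≤ x) :
    0 ≤ ∑ i, a i * (x i - proj n p δ x i) :=
  Finset.sum_nonneg fun i _ => mul_nonneg (ha i) (sub_nonneg.2 (proj_le (hp i) hδ (hx i)))

theorem sum_sub_proj_le (hp : ∀ i, 0 < p i) (ha : ∀ i, 0 ≤ a i) (hδ : 0 < δ) (x : Fin n → ℝ) :
    ∑ i, a i * (x i - proj n p δ x i) ≤ (∑ i, a i * p i) * δ := by
  rw [Finset.sum_mul]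
  refine Finset.sum_le_sum fun i _ => ?_
  have := lt_proj_add (hp i) hδ x (i := i)
  rw [mul_assoc]
  exact mul_le_mul_of_nonneg_left (by linarith) (ha i)

variable {w : (Fin n → ℕ) → ℝ}

theorem le_Vext (hp : ∀ i, 0 < p i) (ha : ∀ i, 0 ≤ a i) (hδ : 0 < δ) (hx : 0 ≤ x) :
    w (rho n p δ x) ≤ Vext n p a δ w x :=
  le_add_of_nonneg_right (sum_sub_proj_nonneg hp ha hδ hx)

theorem sum_mul_sub_le_Vext_sub (hp : ∀ i, 0 < p i) (hδ : 0 < δ)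
    (hw : ∀ m i, a i * p i * δ ≤ w (m + Pi.single i 1) - w m) (hxy : x ≤ y) :
    ∑ i, a i * (y i - x i) ≤ Vext n p a δ w y - Vext n p a δ w x := by
  have hgrid := sum_mul_sub_le_sub_of_le_sub_single hw (rho_mono hp hδ hxy)
  have hproj : ∀ z i, a i * p i * δ * (rho n p δ z i : ℝ) = a i * proj n p δ z i := fun z i => by
    simp only [proj, gdel]; ring
  simp only [mul_sub, hproj, Finset.sum_sub_distrib] at hgrid
  simp only [Vext, mul_sub, Finset.sum_sub_distrib] at hgrid ⊢
  linarith

theorem Vext_sub_le (hp : ∀ i, 0 < p i) (ha : ∀ i, 0 ≤ a i) (hδ : 0 < δ) {t : ℝ} (ht : 0 ≤ t)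
    (hw0 : ∀ m, 0 ≤ w m) (hw : ∀ m i, a i * p i * δ ≤ w (m + Pi.single i 1) - w m)
    (hw1 : ∀ m, w (m + 1) - w m ≤ w m * (Real.exp (t * δ) - 1)) (hx : 0 ≤ x) (hxy : x ≤ y) :
    Vext n p a δ w y - Vext n p a δ w x ≤
      Vext n p a δ w y * (t * (∑ i, (y i - x i) / p i + n * δ)) + (∑ i, a i * p i) * δ := by
  have hy : 0 ≤ y := hx.trans hxy
  have hmono : Monotone w := monotone_of_nonneg_sub_single fun m i =>
    (mul_nonneg (mul_nonneg (ha i) (hp i).le) hδ.le).trans (hw m i)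
  have hgrid := sub_le_mul_sum_sub hw0 hmono (s := t * δ) (fun m => by linarith [hw1 m])
    (rho_mono hp hδ hxy)
  have hsteps : t * δ * ∑ i, ((rho n p δ y i : ℝ) - rho n p δ x i) ≤
      t * (∑ i, (y i - x i) / p i + n * δ) := by
    rw [mul_assoc]; exact mul_le_mul_of_nonneg_left (sum_rho_sub_le hp hδ hy) ht
  have hVy := le_Vext hp ha hδ hy (w := w)
  have hsum : 0 ≤ ∑ i, ((rho n p δ y i : ℝ) - rho n p δ x i) :=
    Finset.sum_nonneg fun i _ => sub_nonneg.2 (Nat.cast_le.2 (rho_mono hp hδ hxy i))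
  have hwy : w (rho n p δ y) - w (rho n p δ x) ≤
      Vext n p a δ w y * (t * (∑ i, (y i - x i) / p i + n * δ)) :=
    hgrid.trans (mul_le_mul hVy hsteps (by positivity) ((hw0 _).trans hVy))
  have := sum_sub_proj_nonneg hp ha hδ hx (a := a)
  have := sum_sub_proj_le hp ha hδ y (a := a)
  simp only [Vext] at hwy ⊢
  linarith

end Discretization

theorem sub_le_mul_sum_div_of_tendsto_Vext {n : ℕ} {p a : Fin n → ℝ} {δ t : ℝ}
    {v : ℕ → (Fin n → ℕ) → ℝ} {Vbar : (Fin n → ℝ) → ℝ}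
    (hp : ∀ i, 0 < p i) (ha : ∀ i, 0 ≤ a i) (hδ : 0 < δ) (ht : 0 ≤ t) (hv0 : ∀ k m, 0 ≤ v k m)
    (hv1 : ∀ k m i, a i * p i * (δ / 2 ^ k) ≤ v k (m + Pi.single i 1) - v k m)
    (hv2 : ∀ k m, v k (m + 1) - v k m ≤ v k m * (Real.exp (t * (δ / 2 ^ k)) - 1))
    (hlim : ∀ x : Fin n → ℝ, 0 ≤ x →
      Tendsto (fun k => Vext n p a (δ / 2 ^ k) (v k) x) atTop (nhds (Vbar x)))
    {x y : Fin n → ℝ} (hx : 0 ≤ x) (hxy : x ≤ y) :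
    Vbar y - Vbar x ≤ Vbar y * (t * ∑ i, (y i - x i) / p i) := by
  have hy := hx.trans hxy
  have hδk : Tendsto (fun k : ℕ => δ / 2 ^ k) atTop (nhds 0) :=
    tendsto_const_nhds.div_atTop (tendsto_pow_atTop_atTop_of_one_lt one_lt_two)
  have hrhs := ((hlim y hy).mul (((tendsto_const_nhds (x := ∑ i, (y i - x i) / p i)).add
    (hδk.const_mul (n : ℝ))).const_mul t)).add (hδk.const_mul (∑ i, a i * p i))
  simpa using le_of_tendsto_of_tendsto' ((hlim y hy).sub (hlim x hx)) hrhs fun k =>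
    Vext_sub_le hp ha (by positivity) ht (hv0 k) (hv1 k) (hv2 k) hx hxy

theorem stmt9_general (n : ℕ) (p a : Fin n → ℝ)
    (hp : ∀ i, 0 < p i) (ha : ∀ i, 0 < a i)
    (c lam δ : ℝ) (hc : 0 < c) (hlam : 0 < lam) (hδ : 0 < δ)
    (v : ℕ → (Fin n → ℕ) → ℝ) (hv0 : ∀ k m, 0 ≤ v k m)
    (hv1 : ∀ (k : ℕ) (m : Fin n → ℕ) (i : Fin n),
      a i * p i * (δ / 2 ^ k) ≤ v k (m + Pi.single i 1) - v k m)
    (hv2 : ∀ (k : ℕ) (m : Fin n → ℕ),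
      v k (m + 1) - v k m ≤ v k m * (Real.exp ((c + lam) * (δ / 2 ^ k)) - 1))
    (Vbar : (Fin n → ℝ) → ℝ)
    (hlim : ∀ x : Fin n → ℝ, 0 ≤ x →
      Tendsto (fun k => Vext n p a (δ / 2 ^ k) (v k) x) atTop (nhds (Vbar x))) :
    (∀ x y : Fin n → ℝ, 0 ≤ x → x ≤ y →
      (∑ i, a i * (y i - x i)) ≤ Vbar y - Vbar x ∧
      Vbar y - Vbar x ≤ Vbar y * (2 * (c + lam) / ⨅ i, p i) * ∑ i, |y i - x i|) ∧
    MonotoneOn Vbar {x : Fin n → ℝ | 0 ≤ x} ∧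
    (∀ x : Fin n → ℝ, 0 ≤ x → ∃ ε > (0:ℝ), ∃ K : NNReal,
      LipschitzOnWith K Vbar ({y : Fin n → ℝ | 0 ≤ y} ∩ Metric.ball x ε)) := by
  have ht : 0 ≤ c + lam := by positivity
  have ha0 : ∀ i, 0 ≤ a i := fun i => (ha i).le
  have hδk : ∀ k : ℕ, 0 < δ / 2 ^ k := fun k => by positivity
  have hVbar : ∀ x, 0 ≤ x → 0 ≤ Vbar x := fun x hx => ge_of_tendsto' (hlim x hx) fun k =>
    (hv0 k _).trans (le_Vext hp ha0 (hδk k) hx)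
  have hlower : ∀ x y, 0 ≤ x → x ≤ y → ∑ i, a i * (y i - x i) ≤ Vbar y - Vbar x :=
    fun x y hx hxy => ge_of_tendsto' ((hlim y (hx.trans hxy)).sub (hlim x hx))
      fun k => sum_mul_sub_le_Vext_sub hp (hδk k) (hv1 k) hxy
  have hupper : ∀ x y, 0 ≤ x → x ≤ y →
      Vbar y - Vbar x ≤ Vbar y * (2 * (c + lam) / ⨅ i, p i) * ∑ i, |y i - x i| := by
    intro x y hx hxy
    rw [mul_assoc]
    exact (sub_le_mul_sum_div_of_tendsto_Vext hp ha0 hδ ht hv0 hv1 hv2 hlim hx hxy).trans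
      (mul_le_mul_of_nonneg_left (mul_sum_div_le_two_mul_div_iInf_mul hp ht (y - x))
        (hVbar y (hx.trans hxy)))
  have hmono : MonotoneOn Vbar {x | 0 ≤ x} := fun x hx y _ hxy => by
    linarith [hlower x y hx hxy, Finset.sum_nonneg fun i (_ : i ∈ Finset.univ) =>
      mul_nonneg (ha0 i) (sub_nonneg.2 (hxy i))]
  refine ⟨fun x y hx hxy => ⟨hlower x y hx hxy, hupper x y hx hxy⟩, hmono, fun x _ => ?_⟩
  exact exists_lipschitzOnWith_inter_ball
    (div_nonneg (by positivity) (Real.iInf_nonneg fun i => (hp i).le)) hmono hupper x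

/-- the limit `V̄` of the embedded-grid extensions is nondecreasing and
locally Lipschitz, with the two-sided increment bound. -/
theorem stmt9 (n : ℕ) (hn : 1 ≤ n) (p a : Fin n → ℝ)
    (hp : ∀ i, 0 < p i) (ha : ∀ i, 0 < a i)
    (c lam δ : ℝ) (hc : 0 < c) (hlam : 0 < lam) (hδ : 0 < δ)
    (v : ℕ → (Fin n → ℕ) → ℝ) (hv0 : ∀ k m, 0 ≤ v k m)
    (hv1 : ∀ (k : ℕ) (m : Fin n → ℕ) (i : Fin n),
      a i * p i * (δ / 2 ^ k) ≤ v k (m + Pi.single i 1) - v k m)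
    (hv2 : ∀ (k : ℕ) (m : Fin n → ℕ),
      v k (m + 1) - v k m ≤ v k m * (Real.exp ((c + lam) * (δ / 2 ^ k)) - 1))
    (hmono : ∀ x : Fin n → ℝ, 0 ≤ x → ∀ k,
      Vext n p a (δ / 2 ^ k) (v k) x ≤ Vext n p a (δ / 2 ^ (k + 1)) (v (k + 1)) x)
    (Vbar : (Fin n → ℝ) → ℝ)
    (hlim : ∀ x : Fin n → ℝ, 0 ≤ x →
      Tendsto (fun k => Vext n p a (δ / 2 ^ k) (v k) x) atTop (nhds (Vbar x))) :
    (∀ x y : Fin n → ℝ, 0 ≤ x → x ≤ y →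
      (∑ i, a i * (y i - x i)) ≤ Vbar y - Vbar x ∧
      Vbar y - Vbar x ≤ Vbar y * (2 * (c + lam) / ⨅ i, p i) * ∑ i, |y i - x i|) ∧
    MonotoneOn Vbar {x : Fin n → ℝ | 0 ≤ x} ∧
    (∀ x : Fin n → ℝ, 0 ≤ x → ∃ ε > (0:ℝ), ∃ K : NNReal,
      LipschitzOnWith K Vbar ({y : Fin n → ℝ | 0 ≤ y} ∩ Metric.ball x ε)) :=
  stmt9_general n p a hp ha c lam δ hc hlam hδ v hv0 hv1 hv2 Vbar hlim

end
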